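/- arXiv:1611.06310 — 3 statements merged into one kernel-verified Lean document; each statement's English description precedes it below -/
import Mathlib

section
/- For the dataset D1 = {(5,2),(4,1),(3,0),(1,-3),(-1,3)} and loss L(w,b,v,c) = Σ_i (v·max(0, w·x_i + b) + c − y_i)², the point (w,b,v,c) = (1,−3,1,0) is a local minimum of L: there exists δ > 0 such that for all (w,b,v,c) with |w−1|<δ, |b+3|<δ, |v−1|<δ, |c|<δ, one has L(w,b,v,c) ≥ 18 = L(1,−3,1,0). -/
def D1 : List (ℝ × ℝ) := [(5, 2), (4, 1), (3, 0), (1, -3), (-1, 3)]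

noncomputable def L1 (w b v c : ℝ) : ℝ :=
  (D1.map (fun p => (v * max 0 (w * p.1 + b) + c - p.2) ^ 2)).sum

theorem local_min :
    L1 1 (-3) 1 0 = 18 ∧
    ∃ δ > (0 : ℝ), ∀ w b v c : ℝ,
      |w - 1| < δ → |b + 3| < δ → |v - 1| < δ → |c| < δ →
      L1 w b v c ≥ 18 := by
  constructor
  · norm_num [L1, D1]
  · refine ⟨1/2, by norm_num, fun w b v c hw hb hv hc => ?_⟩
    rw [abs_lt] at hw hb hv hc
    have h4 : max 0 (w * 1 + b) = 0 := max_eq_left (by linarith [hw.1, hw.2, hb.1, hb.2])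
    have h5 : max 0 (w * (-1) + b) = 0 := max_eq_left (by linarith [hw.1, hw.2, hb.1, hb.2])
    simp only [L1, D1, List.map, List.sum_cons, List.sum_nil, h4, h5]
    nlinarith [sq_nonneg (v * max 0 (w * 5 + b) + c - 2),
      sq_nonneg (v * max 0 (w * 4 + b) + c - 1),
      sq_nonneg (v * max 0 (w * 3 + b) + c - 0), sq_nonneg c]
end

section
/- Let θ be parameters of a k-layer ReLU regression network such that for some layer n and all datapoints x_i, W_n h_{n-1}(x_i) < −b_n coordinatewise (all units of layer n saturated on all data). Then θ is a local minimum of the squared error loss L(θ) = Σ_i (M_θ(x_i) − y_i)² when the output-layer parameters are optimized (constant output equal to the label mean), i.e., with output bias set to the mean of the y_i, L(θ) = Σ_i (y_i − ȳ)² and no nearby parameter perturbation of layers up through n changes the network output. -/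
/-- Hidden-layer stack of a ReLU network: `stack dims W b n x` is the output of the
first `n` hidden layers on input `x` (`h₀ = x`, `h_{n+1} = ReLU(W_n h_n + b_n)`). -/
noncomputable def stack (dims : ℕ → ℕ)
    (W : (n : ℕ) → Fin (dims (n + 1)) → Fin (dims n) → ℝ)
    (b : (n : ℕ) → Fin (dims (n + 1)) → ℝ) :
    (n : ℕ) → (Fin (dims 0) → ℝ) → Fin (dims n) → ℝ
  | 0 => fun x => x
  | n + 1 => fun x j => max 0 ((∑ l, W n j l * stack dims W b n x l) + b n j)

/-- Output of the network with `K` hidden layers. -/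
noncomputable def netOut (dims : ℕ → ℕ) (K : ℕ)
    (W : (n : ℕ) → Fin (dims (n + 1)) → Fin (dims n) → ℝ)
    (b : (n : ℕ) → Fin (dims (n + 1)) → ℝ)
    (Wout : Fin (dims K) → ℝ) (bout : ℝ) (x : Fin (dims 0) → ℝ) : ℝ :=
  (∑ j, Wout j * stack dims W b K x j) + bout

abbrev Param (dims : ℕ → ℕ) (n : ℕ) :=
  ∀ m : Fin (n + 1), (Fin (dims (m.1 + 1)) → Fin (dims m.1) → ℝ) × (Fin (dims (m.1 + 1)) → ℝ)

noncomputable def Wmod (dims : ℕ → ℕ) (n : ℕ)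
    (W : (m : ℕ) → Fin (dims (m + 1)) → Fin (dims m) → ℝ)
    (p : Param dims n) : (m : ℕ) → Fin (dims (m + 1)) → Fin (dims m) → ℝ :=
  fun m => if h : m < n + 1 then (p ⟨m, h⟩).1 else W m

noncomputable def bmod (dims : ℕ → ℕ) (n : ℕ)
    (b : (m : ℕ) → Fin (dims (m + 1)) → ℝ)
    (p : Param dims n) : (m : ℕ) → Fin (dims (m + 1)) → ℝ :=
  fun m => if h : m < n + 1 then (p ⟨m, h⟩).2 else b m

lemma cont_stack (dims : ℕ → ℕ) (n : ℕ)
    (W : (m : ℕ) → Fin (dims (m + 1)) → Fin (dims m) → ℝ)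
    (b : (m : ℕ) → Fin (dims (m + 1)) → ℝ)
    (xx : Fin (dims 0) → ℝ) (m : ℕ) :
    Continuous (fun p : Param dims n => stack dims (Wmod dims n W p) (bmod dims n b p) m xx) := by
  induction m with
  | zero => exact continuous_const
  | succ m ih =>
    apply continuous_pi
    intro j
    simp only [stack]
    apply Continuous.max continuous_const
    apply Continuous.add
    · apply continuous_finset_sum
      intro l _
      apply Continuous.mul
      · by_cases h : m < n + 1
        · simp only [Wmod, dif_pos h]
          exact (continuous_apply l).comp ((continuous_apply j).comp
            (continuous_fst.comp (continuous_apply _)))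
        · simp only [Wmod, dif_neg h]; exact continuous_const
      · exact (continuous_apply l).comp ih
    · by_cases h : m < n + 1
      · simp only [bmod, dif_pos h]
        exact (continuous_apply j).comp (continuous_snd.comp (continuous_apply _))
      · simp only [bmod, dif_neg h]; exact continuous_const

theorem saturated_layer_local_min (dims : ℕ → ℕ) (K : ℕ) (N : ℕ) (hN : 0 < N)
    (x : Fin N → Fin (dims 0) → ℝ) (y : Fin N → ℝ)
    (W : (n : ℕ) → Fin (dims (n + 1)) → Fin (dims n) → ℝ)
    (b : (n : ℕ) → Fin (dims (n + 1)) → ℝ)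
    (Wout : Fin (dims K) → ℝ) (bout : ℝ)
    -- some layer `n + 1 ≤ K` is saturated on all datapoints:
    (n : ℕ) (hn : n + 1 ≤ K)
    (hsat : ∀ (i : Fin N) (j : Fin (dims (n + 1))),
      (∑ l, W n j l * stack dims W b n (x i) l) < - b n j)
    -- the output bias is chosen so that the (constant) output is the label mean:
    (hmean : ∀ i : Fin N,
      netOut dims K W b Wout bout (x i) = (∑ p, y p) / (N : ℝ)) :
    -- (a) the loss equals the total sum of squared deviations from the mean:
    (∑ i, (netOut dims K W b Wout bout (x i) - y i) ^ 2)
        = ∑ i, (y i - (∑ p, y p) / (N : ℝ)) ^ 2 ∧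
    -- (b) small perturbations of the layers up through `n + 1` neither change the
    -- network outputs on the data nor decrease the loss:
    ∃ δ > (0 : ℝ),
      ∀ (W' : (m : ℕ) → Fin (dims (m + 1)) → Fin (dims m) → ℝ)
        (b' : (m : ℕ) → Fin (dims (m + 1)) → ℝ),
        (∀ m : ℕ, n + 1 ≤ m → W' m = W m ∧ b' m = b m) →
        (∀ m : ℕ, m ≤ n → (∀ j l, |W' m j l - W m j l| < δ) ∧
          (∀ j, |b' m j - b m j| < δ)) →
        (∀ i : Fin N,
          netOut dims K W' b' Wout bout (x i) = netOut dims K W b Wout bout (x i)) ∧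
        (∑ i, (netOut dims K W' b' Wout bout (x i) - y i) ^ 2)
          ≥ ∑ i, (netOut dims K W b Wout bout (x i) - y i) ^ 2 := by
  constructor
  · exact Finset.sum_congr rfl fun i _ => by rw [hmean i]; ring
  · set p₀ : Param dims n := fun m => (W m.1, b m.1) with hp₀
    have hW0 : Wmod dims n W p₀ = W := by
      funext m; unfold Wmod; split <;> rfl
    have hb0 : bmod dims n b p₀ = b := by
      funext m; unfold bmod; split <;> rfl
    set S : Set (Param dims n) := {p | ∀ (i : Fin N) (j : Fin (dims (n + 1))),
      (∑ l, Wmod dims n W p n j l *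
          stack dims (Wmod dims n W p) (bmod dims n b p) n (x i) l)
        + bmod dims n b p n j < 0} with hS
    have hSopen : IsOpen S := by
      have hrw : S = ⋂ (i : Fin N), ⋂ (j : Fin (dims (n + 1))),
          {p : Param dims n |
            (∑ l, Wmod dims n W p n j l *
                stack dims (Wmod dims n W p) (bmod dims n b p) n (x i) l)
              + bmod dims n b p n j < 0} := by
        ext p; simp [hS, Set.mem_iInter]
      rw [hrw]
      refine isOpen_iInter_of_finite fun i => isOpen_iInter_of_finite fun j => ?_
      refine isOpen_lt ?_ continuous_const
      apply Continuous.add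
      · apply continuous_finset_sum
        intro l _
        apply Continuous.mul
        · simp only [Wmod, dif_pos (Nat.lt_succ_self n)]
          exact (continuous_apply l).comp ((continuous_apply j).comp
            (continuous_fst.comp (continuous_apply _)))
        · exact (continuous_apply l).comp (cont_stack dims n W b (x i) n)
      · simp only [bmod, dif_pos (Nat.lt_succ_self n)]
        exact (continuous_apply j).comp (continuous_snd.comp (continuous_apply _))
    have hp₀S : p₀ ∈ S := by
      intro i j
      rw [hW0, hb0]
      have := hsat i j
      linarith
    obtain ⟨ε, εpos, hball⟩ := Metric.isOpen_iff.mp hSopen p₀ hp₀S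
    refine ⟨ε, εpos, ?_⟩
    intro W' b' hhigh hlow
    set p' : Param dims n := fun m => (W' m.1, b' m.1) with hp'
    have hW' : Wmod dims n W p' = W' := by
      funext m
      unfold Wmod
      split
      · rfl
      · next h => exact (hhigh m (by omega)).1.symm
    have hb' : bmod dims n b p' = b' := by
      funext m
      unfold bmod
      split
      · rfl
      · next h => exact (hhigh m (by omega)).2.symm
    have hmem : p' ∈ Metric.ball p₀ ε := by
      rw [Metric.mem_ball, dist_pi_lt_iff εpos]
      intro m
      rw [Prod.dist_eq]
      apply max_lt
      · rw [dist_pi_lt_iff εpos]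
        intro j
        rw [dist_pi_lt_iff εpos]
        intro l
        rw [Real.dist_eq]
        exact (hlow m.1 (by omega)).1 j l
      · rw [dist_pi_lt_iff εpos]
        intro j
        rw [Real.dist_eq]
        exact (hlow m.1 (by omega)).2 j
    have hS' := hball hmem
    simp only [hS, Set.mem_setOf_eq, hW', hb'] at hS'
    have hkey : ∀ (i : Fin N) (m : ℕ), n + 1 ≤ m →
        stack dims W' b' m (x i) = stack dims W b m (x i) := by
      intro i
      refine Nat.le_induction ?_ ?_
      · funext j
        simp only [stack]
        have h1 : (∑ l, W n j l * stack dims W b n (x i) l) + b n j < 0 := by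
          have := hsat i j; linarith
        have h2 := hS' i j
        rw [max_eq_left h1.le, max_eq_left h2.le]
      · intro m hm ih
        funext j
        simp only [stack]
        rw [ih, (hhigh m hm).1, (hhigh m hm).2]
    have hout : ∀ i : Fin N,
        netOut dims K W' b' Wout bout (x i) = netOut dims K W b Wout bout (x i) := by
      intro i
      unfold netOut
      rw [hkey i K hn]
    exact ⟨hout, le_of_eq (Finset.sum_congr rfl fun i _ => by rw [hout i])⟩
end

section
/- Call a dataset (x_i, y_i), i=1,…,N, 'decent' if there exists an index r such that the mean of {y_p : x_p = x_r} differs from the mean of all labels. If the dataset is decent and the first layer has at least 3 neurons, then the constant predictor outputting ȳ (the mean of all labels) is not a global minimum of the squared error loss for a one-hidden-layer ReLU network: there exist parameters (W, b, v, c) of a 3-unit ReLU network achieving strictly smaller loss than Σ_i (y_i − ȳ)². -/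
/-- There is a direction separating `x r` from all other data points. -/
lemma exists_sep_dir {d N : ℕ} (x : Fin N → (Fin d → ℝ)) (r s₀ : Fin N)
    (hs₀ : x s₀ ≠ x r) :
    ∃ w : Fin d → ℝ, ∀ s, x s ≠ x r →
      (1 : ℝ) ≤ |(∑ l, w l * x s l) - (∑ l, w l * x r l)| := by
  classical
  -- linear functionals
  let f : Fin N → ((Fin d → ℝ) →ₗ[ℝ] ℝ) := fun s =>
    ∑ l, (x s l - x r l) • (LinearMap.proj l)
  have hf : ∀ s w, f s w = ∑ l, (x s l - x r l) * w l := by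
    intro s w
    simp [f, LinearMap.sum_apply, LinearMap.smul_apply, smul_eq_mul]
  have hfne : ∀ s, x s ≠ x r → f s ≠ 0 := by
    intro s hs h0
    have : f s (fun l => x s l - x r l) = 0 := by rw [h0]; rfl
    rw [hf] at this
    have hpos : 0 < ∑ l, (x s l - x r l) * (x s l - x r l) := by
      obtain ⟨l, hl⟩ : ∃ l, x s l - x r l ≠ 0 := by
        by_contra hc
        push_neg at hc
        exact hs (funext fun l => by linarith [hc l])
      exact Finset.sum_pos' (fun l _ => mul_self_nonneg _)
        ⟨l, Finset.mem_univ l, mul_self_pos.2 hl⟩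
    linarith
  let p : Fin N → Subspace ℝ (Fin d → ℝ) := fun s =>
    if x s = x r then LinearMap.ker (f s₀) else LinearMap.ker (f s)
  have hpne : ∀ s, p s ≠ ⊤ := by
    intro s
    by_cases h : x s = x r
    · simp only [p, if_pos h]
      rw [Ne, LinearMap.ker_eq_top]
      exact hfne s₀ hs₀
    · simp only [p, if_neg h]
      rw [Ne, LinearMap.ker_eq_top]
      exact hfne s h
  obtain ⟨w, hw⟩ : ∃ w : Fin d → ℝ, ∀ s, w ∉ p s := by
    by_contra hc
    push_neg at hc
    have hcov : ⋃ i, ((p i : Set (Fin d → ℝ))) = Set.univ := by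
      ext w
      simp only [Set.mem_iUnion, Set.mem_univ, iff_true]
      obtain ⟨s, hs⟩ := hc w
      exact ⟨s, hs⟩
    obtain ⟨i, hi⟩ := Subspace.exists_eq_top_of_iUnion_eq_univ hcov
    exact hpne i hi
  have hwne : ∀ s, x s ≠ x r → f s w ≠ 0 := by
    intro s hs
    have := hw s
    simp only [p, if_neg hs, LinearMap.mem_ker] at this
    exact this
  -- scale
  set T := Finset.univ.filter (fun s => x s ≠ x r) with hT
  have hTne : T.Nonempty := ⟨s₀, by simp [hT, hs₀]⟩
  set ε := T.inf' hTne (fun s => |f s w|) with hε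
  have hεpos : 0 < ε := by
    rw [hε, Finset.lt_inf'_iff]
    intro s hsT
    rw [hT, Finset.mem_filter] at hsT
    exact abs_pos.2 (hwne s hsT.2)
  refine ⟨fun l => ε⁻¹ * w l, fun s hs => ?_⟩
  have hle : ε ≤ |f s w| :=
    Finset.inf'_le _ (by simp [hT, hs])
  have heq : (∑ l, (ε⁻¹ * w l) * x s l) - (∑ l, (ε⁻¹ * w l) * x r l)
      = ε⁻¹ * f s w := by
    rw [hf, Finset.mul_sum, ← Finset.sum_sub_distrib]
    exact Finset.sum_congr rfl (fun l _ => by ring)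
  rw [heq, abs_mul, abs_of_pos (inv_pos.2 hεpos)]
  calc (1 : ℝ) = ε⁻¹ * ε := by field_simp
    _ ≤ ε⁻¹ * |f s w| :=
      mul_le_mul_of_nonneg_left hle (le_of_lt (inv_pos.2 hεpos))

open Classical in
theorem decent_not_global_min (d N : ℕ) (hN : 0 < N)
    (x : Fin N → (Fin d → ℝ)) (y : Fin N → ℝ)
    (r : Fin N)
    (hdecent :
      (∑ p ∈ Finset.univ.filter (fun p => x p = x r), y p)
          / ((Finset.univ.filter (fun p => x p = x r)).card : ℝ)
        ≠ (∑ p, y p) / (N : ℝ)) :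
    ∃ (W : Fin 3 → Fin d → ℝ) (b : Fin 3 → ℝ) (v : Fin 3 → ℝ) (c : ℝ),
      (∑ i, ((∑ j, v j * max 0 ((∑ l, W j l * x i l) + b j)) + c - y i) ^ 2)
        < ∑ i, (y i - (∑ p, y p) / (N : ℝ)) ^ 2 := by
  classical
  set S := Finset.univ.filter (fun p => x p = x r) with hS
  set ν := (∑ p ∈ S, y p) / (S.card : ℝ) with hν
  set μ := (∑ p, y p) / (N : ℝ) with hμ
  -- there is a point differing from x r
  obtain ⟨s₀, hs₀⟩ : ∃ s, x s ≠ x r := by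
    by_contra hc
    push_neg at hc
    apply hdecent
    have hSu : S = Finset.univ := by
      ext p; simp [hS, hc p]
    show (∑ p ∈ S, y p) / (S.card : ℝ) = (∑ p, y p) / (N : ℝ)
    rw [hSu, Finset.card_univ, Fintype.card_fin]
  obtain ⟨w, hw⟩ := exists_sep_dir x r s₀ hs₀
  set γ := ∑ l, w l * x r l with hγ
  refine ⟨![w, fun l => 2 * w l, w], ![1 - γ, -(2 * γ), -(1 + γ)],
    ![ν - μ, -(ν - μ), ν - μ], μ, ?_⟩
  have hpred : ∀ i, (∑ j, (![ν - μ, -(ν - μ), ν - μ]) j *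
      max 0 ((∑ l, (![w, fun l => 2 * w l, w]) j l * x i l)
        + (![1 - γ, -(2 * γ), -(1 + γ)]) j)) + μ
      = if x i = x r then ν else μ := by
    intro i
    rw [Fin.sum_univ_three]
    simp only [Matrix.cons_val_zero, Matrix.cons_val_one, Matrix.head_cons,
      Matrix.cons_val_two, Matrix.tail_cons]
    set t := ∑ l, w l * x i l with ht
    have h2 : (∑ l, (2 * w l) * x i l) = 2 * t := by
      rw [ht, Finset.mul_sum]; exact Finset.sum_congr rfl (fun l _ => by ring)
    rw [h2]
    by_cases hxi : x i = x r
    · have htγ : t = γ := by rw [ht, hγ, hxi]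
      rw [if_pos hxi, htγ]
      norm_num
    · have habs : 1 ≤ |t - γ| := hw i hxi
      rw [if_neg hxi]
      rcases le_abs.1 habs with h | h
      · -- t - γ ≥ 1
        have h1 : max 0 (t + (1 - γ)) = t + (1 - γ) := max_eq_right (by linarith)
        have h2' : max 0 (2 * t + -(2 * γ)) = 2 * t + -(2 * γ) :=
          max_eq_right (by linarith)
        have h3 : max 0 (t + -(1 + γ)) = t + -(1 + γ) := max_eq_right (by linarith)
        rw [h1, h2', h3]; ring
      · -- -(t - γ) ≥ 1
        have h1 : max 0 (t + (1 - γ)) = 0 := max_eq_left (by linarith)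
        have h2' : max 0 (2 * t + -(2 * γ)) = 0 := max_eq_left (by linarith)
        have h3 : max 0 (t + -(1 + γ)) = 0 := max_eq_left (by linarith)
        rw [h1, h2', h3]; ring
  have hrw : ∀ i, ((∑ j, (![ν - μ, -(ν - μ), ν - μ]) j *
      max 0 ((∑ l, (![w, fun l => 2 * w l, w]) j l * x i l)
        + (![1 - γ, -(2 * γ), -(1 + γ)]) j)) + μ - y i) ^ 2
      = (if x i = x r then ν else μ) ^ 2 - 2 * (if x i = x r then ν else μ) * y i
        + y i ^ 2 := by
    intro i; rw [hpred i]; ring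
  calc (∑ i, ((∑ j, (![ν - μ, -(ν - μ), ν - μ]) j *
      max 0 ((∑ l, (![w, fun l => 2 * w l, w]) j l * x i l)
        + (![1 - γ, -(2 * γ), -(1 + γ)]) j)) + μ - y i) ^ 2)
      = ∑ i, ((if x i = x r then ν else μ) - y i) ^ 2 := by
        refine Finset.sum_congr rfl fun i _ => ?_
        rw [hpred i]
    _ < ∑ i, (y i - μ) ^ 2 := by
        rw [← Finset.sum_filter_add_sum_filter_not Finset.univ (fun p => x p = x r)
          (fun i => ((if x i = x r then ν else μ) - y i) ^ 2),
          ← Finset.sum_filter_add_sum_filter_not Finset.univ (fun p => x p = x r)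
          (fun i => (y i - μ) ^ 2)]
        have hoff : ∑ i ∈ Finset.univ.filter (fun p => ¬ x p = x r),
            ((if x i = x r then ν else μ) - y i) ^ 2
            = ∑ i ∈ Finset.univ.filter (fun p => ¬ x p = x r), (y i - μ) ^ 2 := by
          refine Finset.sum_congr rfl fun i hi => ?_
          rw [Finset.mem_filter] at hi
          rw [if_neg hi.2]; ring
        rw [hoff]
        have hon : ∑ i ∈ S, ((if x i = x r then ν else μ) - y i) ^ 2
            = ∑ i ∈ S, (ν - y i) ^ 2 := by
          refine Finset.sum_congr rfl fun i hi => ?_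
          rw [hS, Finset.mem_filter] at hi
          rw [if_pos hi.2]
        rw [show Finset.univ.filter (fun p => x p = x r) = S from rfl, hon]
        have hrS : r ∈ S := by simp [hS]
        have hcard : (0 : ℝ) < S.card := by
          exact_mod_cast Finset.card_pos.2 ⟨r, hrS⟩
        have hsum : ∑ p ∈ S, y p = ν * S.card := by
          rw [hν]; field_simp
        have hdiff : ∑ i ∈ S, (y i - μ) ^ 2 - ∑ i ∈ S, (ν - y i) ^ 2
            = (S.card : ℝ) * (ν - μ) ^ 2 := by
          rw [← Finset.sum_sub_distrib]
          have : ∀ i ∈ S, (y i - μ) ^ 2 - (ν - y i) ^ 2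
              = (ν - μ) * (2 * y i) - (ν - μ) * (μ + ν) := fun i _ => by ring
          rw [Finset.sum_congr rfl this, Finset.sum_sub_distrib,
            ← Finset.mul_sum, ← Finset.mul_sum, Finset.sum_const,
            nsmul_eq_mul, hsum]
          ring
        have hνμ : ν ≠ μ := hdecent
        have h0 : ν - μ ≠ 0 := sub_ne_zero.mpr hνμ
        have : 0 < (S.card : ℝ) * (ν - μ) ^ 2 :=
          mul_pos hcard (lt_of_le_of_ne (sq_nonneg _)
            (Ne.symm (pow_ne_zero 2 h0)))
        linarith [hdiff]
  done
end
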